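/- arXiv:1809.01340 — 5 statements merged into one kernel-verified Lean document; each statement's English description precedes it below -/
import Mathlib

section
/- For every even positive integer n, there are no uniquely sorted permutations in S_n; that is, no π ∈ S_n has fertility exactly 1 when n is even. -/
open scoped BigOperators

/-- The `i`-th entry (1-indexed) of a word. -/
def entry (π : List ℕ) (i : ℕ) : ℕ := π.getD (i - 1) 0

/-- Fuel-based implementation of the stack-sorting recursion
`s(L m R) = s(L) s(R) m` where `m` is the largest letter. -/
def stackSortFuel : ℕ → List ℕ → List ℕ
  | 0, _ => []
  | fuel+1, w =>
    if w = [] then []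
    else
      let m := w.foldr max 0
      stackSortFuel fuel (w.takeWhile (fun x => x != m)) ++
        stackSortFuel fuel ((w.dropWhile (fun x => x != m)).tail) ++ [m]

/-- The (West) stack-sorting map `s`. -/
def stackSort (w : List ℕ) : List ℕ := stackSortFuel w.length w

/-- `π` is a permutation of `{1, …, n}`, written as a word. -/
def InSn (n : ℕ) (π : List ℕ) : Prop := π.Perm (List.range' 1 n)

/-- The fertility of `π`: the number of `σ ∈ S_n` with `s(σ) = π`. -/
noncomputable def fertility (n : ℕ) (π : List ℕ) : ℕ :=
  {σ : List ℕ | InSn n σ ∧ stackSort σ = π}.ncard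

/-- The set of descents of `π` (1-indexed): indices `i` with `π_i > π_{i+1}`. -/
def descents (π : List ℕ) : Finset ℕ :=
  (Finset.Icc 1 (π.length - 1)).filter (fun i => entry π (i + 1) < entry π i)

/-- A hook of `π`, recorded by the positions of its southwest and northeast endpoints. -/
def IsHook (π : List ℕ) (h : ℕ × ℕ) : Prop :=
  1 ≤ h.1 ∧ h.1 < h.2 ∧ h.2 ≤ π.length ∧ entry π h.1 < entry π h.2

/-- The set of lattice points of the plane lying on the hook `h`
(the vertical segment together with the horizontal segment). -/
def hookPoints (π : List ℕ) (h : ℕ × ℕ) : Set (ℕ × ℕ) :=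
  {p | (p.1 = h.1 ∧ entry π h.1 ≤ p.2 ∧ p.2 ≤ entry π h.2) ∨
       (h.1 ≤ p.1 ∧ p.1 ≤ h.2 ∧ p.2 = entry π h.2)}

/-- `H` is a valid hook configuration of `π`: the tuple of hooks (listed by southwest
endpoints, which are exactly the descent tops in increasing order) such that no point of the
plot lies above a hook, and hooks do not intersect except that the northeast endpoint of one
may be the southwest endpoint of another. -/
def IsVHC (π : List ℕ) (H : List (ℕ × ℕ)) : Prop :=
  H.map Prod.fst = (descents π).sort (· ≤ ·) ∧
  (∀ h ∈ H, IsHook π h) ∧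
  (∀ h ∈ H, ∀ m : ℕ, h.1 ≤ m → m ≤ h.2 → ¬ entry π h.2 < entry π m) ∧
  (∀ h ∈ H, ∀ h' ∈ H, h ≠ h' → (hookPoints π h ∩ hookPoints π h').Nonempty →
    h.2 = h'.1 ∨ h'.2 = h.1)

/-- The set of normalized valid hook configurations on `n` points, recorded together with
their underlying permutations. -/
def VHCSet (n : ℕ) : Set (List ℕ × List (ℕ × ℕ)) :=
  {p | InSn n p.1 ∧ IsVHC p.1 p.2}

/-- The set of normalized valid hook configurations on `n` points with exactly `h` hooks. -/
def VHCSetH (n h : ℕ) : Set (List ℕ × List (ℕ × ℕ)) :=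
  {p | InSn n p.1 ∧ IsVHC p.1 p.2 ∧ p.2.length = h}

/-- In the coloring induced by `H`, the hook `h` is a candidate color for the point in
position `m`: its horizontal part passes above the point, and it is not the hook whose
southwest endpoint is that very point. -/
def CandidateHook (π : List ℕ) (H : List (ℕ × ℕ)) (m : ℕ) (h : ℕ × ℕ) : Prop :=
  h ∈ H ∧ h.1 ≤ m ∧ m < h.2 ∧ entry π m < entry π h.2 ∧ h.1 ≠ m

/-- `h` is the lowest hook passing above the point in position `m`; the point then receives
the color of `h`. -/
def LowestHook (π : List ℕ) (H : List (ℕ × ℕ)) (m : ℕ) (h : ℕ × ℕ) : Prop :=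
  CandidateHook π H m h ∧ ∀ h', CandidateHook π H m h' → entry π h.2 ≤ entry π h'.2

/-- The point in position `m` sees the sky: no hook passes above it. -/
def SkyColored (π : List ℕ) (H : List (ℕ × ℕ)) (m : ℕ) : Prop :=
  ∀ h, ¬ CandidateHook π H m h

/-- The point in position `m` is one of the points of the plot that gets colored,
i.e. it is not a northeast endpoint of a hook of `H`. -/
def ColoredPoint (π : List ℕ) (H : List (ℕ × ℕ)) (m : ℕ) : Prop :=
  1 ≤ m ∧ m ≤ π.length ∧ ∀ h ∈ H, h.2 ≠ m

/-- The points in positions `m` and `m'` receive the same color. -/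
def SameColor (π : List ℕ) (H : List (ℕ × ℕ)) (m m' : ℕ) : Prop :=
  (SkyColored π H m ∧ SkyColored π H m') ∨
  (∃ h, LowestHook π H m h ∧ LowestHook π H m' h)

/-- `colorCount π H t` is the number of points of the plot of `π` receiving the `t`-th color
in the coloring induced by `H`: the sky color for `t = 0`, and the color of the `t`-th hook
for `1 ≤ t ≤ k`. -/
noncomputable def colorCount (π : List ℕ) (H : List (ℕ × ℕ)) (t : ℕ) : ℕ :=
  if t = 0 then {m : ℕ | ColoredPoint π H m ∧ SkyColored π H m}.ncard
  else {m : ℕ | ColoredPoint π H m ∧ LowestHook π H m (H.getD (t - 1) (0, 0))}.ncard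

/-- `ρ` is a partition of the set `{1, …, n}`. -/
def IsPartitionOf (n : ℕ) (ρ : Finset (Finset ℕ)) : Prop :=
  (∀ B ∈ ρ, B.Nonempty) ∧
  (∀ B ∈ ρ, ∀ B' ∈ ρ, B ≠ B' → Disjoint B B') ∧
  ρ.sup id = Finset.Icc 1 n

/-- `B` and `B'` cross with `i < j < k < l`, `i,k ∈ B`, `j,l ∈ B'`. -/
def Crosses (B B' : Finset ℕ) : Prop :=
  ∃ i ∈ B, ∃ k ∈ B, ∃ j ∈ B', ∃ l ∈ B', i < j ∧ j < k ∧ k < l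

/-- Two distinct blocks form a crossing. -/
def CrossEdge (B B' : Finset ℕ) : Prop :=
  B ≠ B' ∧ (Crosses B B' ∨ Crosses B' B)

/-- The crossing graph of a partition: vertices are the blocks, two blocks adjacent
iff they form a crossing. -/
def crossingGraph (ρ : Finset (Finset ℕ)) : SimpleGraph {B // B ∈ ρ} where
  Adj B B' := CrossEdge B.1 B'.1
  symm := ⟨fun _ _ hBB => ⟨hBB.1.symm, hBB.2.symm⟩⟩
  loopless := ⟨fun _ hBB => hBB.1 rfl⟩

/-- `(ρ, d)` is a pair consisting of a connected partition `ρ` of `{1, …, n}` together with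
an acyclic orientation `d` of its crossing graph whose unique source is the block
containing `n`; i.e. `(ρ, d) ∈ P̃^c(n)`. -/
def IsOrientedPartitionPair (n : ℕ) (ρ : Finset (Finset ℕ))
    (d : Finset ℕ → Finset ℕ → Prop) : Prop :=
  IsPartitionOf n ρ ∧ (crossingGraph ρ).Connected ∧
  (∀ B B', d B B' → B ∈ ρ ∧ B' ∈ ρ ∧ CrossEdge B B') ∧
  (∀ B ∈ ρ, ∀ B' ∈ ρ, CrossEdge B B' → (d B B' ∨ d B' B)) ∧
  (∀ B B', d B B' → ¬ d B' B) ∧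
  (∀ B, ¬ Relation.TransGen d B B) ∧
  (∀ B ∈ ρ, ((∀ B', ¬ d B' B) ↔ n ∈ B))

/-- The set `P̃^c(n)`. -/
def PtildeC (n : ℕ) : Set (Finset (Finset ℕ) × (Finset ℕ → Finset ℕ → Prop)) :=
  {p | IsOrientedPartitionPair n p.1 p.2}

/-- The set `M̃^c(n)`: the pairs of `P̃^c(n)` whose partition is a matching. -/
def MtildeC (n : ℕ) : Set (Finset (Finset ℕ) × (Finset ℕ → Finset ℕ → Prop)) :=
  {p | IsOrientedPartitionPair n p.1 p.2 ∧ ∀ B ∈ p.1, B.card = 2}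

/-- The tail length of `π ∈ S_n`: the smallest `i ≥ 0` with `π_{n-i} ≠ n-i`
(and `n` for the identity permutation). -/
noncomputable def tailLength (n : ℕ) (π : List ℕ) : ℕ :=
  if h : ∃ i, i < n ∧ entry π (n - i) ≠ n - i then Nat.find h else n

/-- `h` is the top hook of `H`: the hook whose northeast endpoint is farthest to the north. -/
def TopHook (π : List ℕ) (H : List (ℕ × ℕ)) (h : ℕ × ℕ) : Prop :=
  h ∈ H ∧ ∀ h' ∈ H, entry π h'.2 ≤ entry π h.2

/-- The eye of `π` is `e`: for a valid hook configuration of `π` with top hook `h`, the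
leftmost point of the sheltered piece (the points strictly under the top hook) has value `e`. -/
def HasEye (π : List ℕ) (e : ℕ) : Prop :=
  ∃ H, IsVHC π H ∧ ∃ h, TopHook π H h ∧
    ∃ m, (h.1 < m ∧ m < h.2 ∧ entry π m < entry π h.2) ∧
      (∀ m', (h.1 < m' ∧ m' < h.2 ∧ entry π m' < entry π h.2) → m ≤ m') ∧
      entry π m = e

/-- `D_m(n)`: the total number of valid hook configurations of permutations in `S_n`
with tail length `m`. -/
noncomputable def Dcount (m n : ℕ) : ℕ :=
  {p : List ℕ × List (ℕ × ℕ) |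
    InSn n p.1 ∧ tailLength n p.1 = m ∧ IsVHC p.1 p.2}.ncard

/-- `D_{≥m}(n) = Σ_{ℓ=m}^n D_ℓ(n)`. -/
noncomputable def Dge (m n : ℕ) : ℕ := ∑ l ∈ Finset.Icc m n, Dcount l n

/-- `E_m(n)`: the number of uniquely sorted permutations in `S_n` with tail length `m`. -/
noncomputable def Ecount (m n : ℕ) : ℕ :=
  {π : List ℕ | InSn n π ∧ fertility n π = 1 ∧ tailLength n π = m}.ncard

/-- `E_{≥m}(n) = Σ_{ℓ=m}^n E_ℓ(n)`. -/
noncomputable def Ege (m n : ℕ) : ℕ := ∑ l ∈ Finset.Icc m n, Ecount l n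

/-- Binary plane trees with vertices labeled by positive integers
(`leaf` denotes the absence of a vertex). -/
inductive BTree : Type
  | leaf : BTree
  | node : BTree → ℕ → BTree → BTree

namespace BTree

/-- The in-order (symmetric order) reading of a tree. -/
def inorder : BTree → List ℕ
  | leaf => []
  | node l x r => inorder l ++ x :: inorder r

/-- The postorder reading of a tree. -/
def postorder : BTree → List ℕ
  | leaf => []
  | node l x r => postorder l ++ postorder r ++ [x]

/-- Every non-root vertex has a label smaller than the label of its parent. -/
def IsDecreasing : BTree → Prop
  | leaf => True
  | node l x r => (∀ y ∈ inorder l, y < x) ∧ (∀ y ∈ inorder r, y < x) ∧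
      IsDecreasing l ∧ IsDecreasing r

/-- A decreasing binary plane tree: labels are distinct positive integers, decreasing
away from the root. -/
def IsDBPT (T : BTree) : Prop :=
  IsDecreasing T ∧ T.inorder.Nodup ∧ ∀ y ∈ T.inorder, 0 < y

/-- `T` is lonely: no other decreasing binary plane tree has the same postorder reading. -/
def Lonely (T : BTree) : Prop :=
  IsDBPT T ∧ ∀ T', IsDBPT T' → postorder T' = postorder T → T' = T

/-- Every vertex has either 0 or 2 children. -/
def IsFull : BTree → Prop
  | leaf => True
  | node l _ r => ((l = leaf) ↔ (r = leaf)) ∧ IsFull l ∧ IsFull r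

/-- The root label (0 for the empty tree). -/
def rootD : BTree → ℕ
  | leaf => 0
  | node _ x _ => x

/-- Canonical trees: every vertex with a left child also has a right child, and every left
child has a label larger than the label of its leftmost cousin (the leftmost vertex of the
sibling right subtree). -/
def IsCanonical : BTree → Prop
  | leaf => True
  | node l _ r =>
      (l ≠ leaf → (r ≠ leaf ∧ (inorder r).headD 0 < rootD l)) ∧
      IsCanonical l ∧ IsCanonical r

end BTree

/-- The exponential of a formal power series with zero constant term. -/
noncomputable def psExp (C : PowerSeries ℝ) : PowerSeries ℝ :=
  PowerSeries.mk fun n =>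
    ∑ k ∈ Finset.range (n + 1), (PowerSeries.coeff n (C ^ k)) / (k.factorial : ℝ)


/-!
Write a word as `σ = L m R` with `m` its largest letter, so that `s(σ) = s(L) s(R) m`.
Replacing `L` (or `R`) by another word with the same image under `s`, or, when `L = ∅`,
moving `m` from the front to the back (`s(m R) = s(R) m = s(R m)`), and symmetrically when
`R = ∅`, yields a second preimage of `s(σ)`. If `|σ|` is even then `|L| + |R|` is odd, so one of
`L`, `R` has even length and induction on the length gives `σ' ≠ σ` with `s(σ') = s(σ)`.
-/

namespace List

theorem foldr_max_zero_mem {w : List ℕ} (hw : w ≠ []) : w.foldr max 0 ∈ w :=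
  maximum_mem (foldr_max_of_ne_nil hw).symm

theorem le_foldr_max_zero {w : List ℕ} {x : ℕ} (hx : x ∈ w) : x ≤ w.foldr max 0 :=
  le_max_of_le hx le_rfl

theorem exists_eq_append_cons_first_max {w : List ℕ} (hw : w ≠ []) :
    ∃ L m R, w = L ++ m :: R ∧ (∀ x ∈ L, x < m) ∧ ∀ x ∈ R, x ≤ m := by
  obtain ⟨L, R, hmL, hw, -⟩ := exists_erase_eq (foldr_max_zero_mem hw)
  have hmem : ∀ x, x ∈ L ∨ x ∈ R → x ∈ w := fun x hx => by rw [hw]; simp; tauto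
  refine ⟨L, _, R, hw, fun x hx => ?_, fun x hx => le_foldr_max_zero (hmem x (.inr hx))⟩
  exact (le_foldr_max_zero (hmem x (.inl hx))).lt_of_ne (by rintro rfl; exact hmL hx)

end List

theorem stackSortFuel_succ_append_cons (f : ℕ) {L R : List ℕ} {m : ℕ} (hL : ∀ x ∈ L, x < m)
    (hR : ∀ x ∈ R, x ≤ m) :
    stackSortFuel (f + 1) (L ++ m :: R) = stackSortFuel f L ++ stackSortFuel f R ++ [m] := by
  have hmax : (L ++ m :: R).foldr max 0 = m := by
    refine le_antisymm (List.max_le_of_forall_le _ _ fun x hx => ?_)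
      (List.le_foldr_max_zero (by simp))
    simp only [List.mem_append, List.mem_cons] at hx
    rcases hx with hx | rfl | hx
    exacts [(hL x hx).le, le_rfl, hR x hx]
  have hLm : ∀ x ∈ L, ¬ x = m := fun x hx => (hL x hx).ne
  have hT : L.takeWhile (· != m) = L := List.takeWhile_eq_self_iff.2 (by simpa using hLm)
  simp [stackSortFuel, hmax, List.takeWhile_append, List.dropWhile_append, hT,
    if_pos hLm]

theorem stackSort_nil : stackSort [] = [] := rfl

theorem stackSortFuel_of_length_le {f : ℕ} {w : List ℕ} (h : w.length ≤ f) :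
    stackSortFuel f w = stackSort w := by
  induction hn : w.length using Nat.strong_induction_on generalizing f w with
  | _ n ih =>
  rcases eq_or_ne w [] with rfl | hw
  · cases f <;> rfl
  obtain ⟨L, m, R, rfl, hL, hR⟩ := List.exists_eq_append_cons_first_max hw
  have hlen : (L ++ m :: R).length = L.length + R.length + 1 := by simp; omega
  have key : ∀ g, L.length + R.length + 1 ≤ g →
      stackSortFuel g (L ++ m :: R) = stackSort L ++ stackSort R ++ [m] := by
    intro g hg
    obtain ⟨g, rfl⟩ : ∃ g', g = g' + 1 := ⟨g - 1, by omega⟩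
    rw [stackSortFuel_succ_append_cons g hL hR, ih L.length (by omega) (by omega) rfl,
      ih R.length (by omega) (by omega) rfl]
  exact (key f (hlen ▸ h)).trans (key _ hlen.ge).symm

theorem stackSort_append_cons {L R : List ℕ} {m : ℕ} (hL : ∀ x ∈ L, x < m)
    (hR : ∀ x ∈ R, x ≤ m) : stackSort (L ++ m :: R) = stackSort L ++ stackSort R ++ [m] := by
  have hlen : (L ++ m :: R).length = (L.length + R.length) + 1 := by simp; omega
  rw [stackSort, hlen, stackSortFuel_succ_append_cons _ hL hR,
    stackSortFuel_of_length_le (by omega), stackSortFuel_of_length_le (by omega)]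

theorem stackSort_cons_eq_concat {R : List ℕ} {m : ℕ} (hR : ∀ x ∈ R, x < m) :
    stackSort (m :: R) = stackSort (R ++ [m]) := by
  rw [← List.nil_append (m :: R), stackSort_append_cons (by simp) fun x hx => (hR x hx).le,
    stackSort_append_cons hR (by simp)]
  simp [stackSort_nil]

theorem exists_perm_ne_stackSort_eq {w : List ℕ} (hnd : w.Nodup) (hw : w ≠ [])
    (hev : Even w.length) : ∃ w', w'.Perm w ∧ w' ≠ w ∧ stackSort w' = stackSort w := by
  induction hn : w.length using Nat.strong_induction_on generalizing w with
  | _ n ih =>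
  obtain ⟨L, m, R, rfl, hL, hR⟩ := List.exists_eq_append_cons_first_max hw
  have hmLR : m ∉ L ++ R := (List.nodup_cons.1 (List.nodup_middle.1 hnd)).1
  replace hR : ∀ x ∈ R, x < m := fun x hx =>
    (hR x hx).lt_of_ne (by rintro rfl; exact hmLR (List.mem_append_right _ hx))
  have hlen : L.length + R.length + 1 = n := by simp at hn; omega
  have hodd : Odd (L.length + R.length) := by
    rwa [hn, ← hlen, Nat.even_add_one, Nat.not_even_iff_odd] at hev
  rcases eq_or_ne L [] with rfl | hL0
  · obtain ⟨r, R, rfl⟩ :=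
      List.exists_cons_of_ne_nil (List.ne_nil_of_length_pos (by simpa using hodd.pos))
    refine ⟨r :: R ++ [m], List.perm_append_singleton _ _, ?_,
      (stackSort_cons_eq_concat hR).symm⟩
    simp [(hR r (by simp)).ne]
  rcases eq_or_ne R [] with rfl | hR0
  · refine ⟨m :: L, (List.perm_append_singleton _ _).symm, ?_, stackSort_cons_eq_concat hL⟩
    obtain ⟨l, L, rfl⟩ := List.exists_cons_of_ne_nil hL0
    simp [(hL l (by simp)).ne']
  have hndL := hnd.sublist (List.sublist_append_left L (m :: R))
  have hndR := (hnd.sublist (List.sublist_append_right L (m :: R))).of_cons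
  rcases Nat.even_or_odd L.length with hLev | hLodd
  · obtain ⟨L', hperm, hne, hs⟩ := ih L.length (by omega) hndL hL0 hLev rfl
    refine ⟨L' ++ m :: R, hperm.append_right _, fun h => hne (List.append_cancel_right h), ?_⟩
    rw [stackSort_append_cons (fun x hx => hL x (hperm.subset hx)) fun x hx => (hR x hx).le,
      stackSort_append_cons hL fun x hx => (hR x hx).le, hs]
  · have hRev : Even R.length := by
      obtain ⟨a, ha⟩ := hLodd
      obtain ⟨b, hb⟩ := hodd
      exact ⟨R.length / 2, by omega⟩
    obtain ⟨R', hperm, hne, hs⟩ := ih R.length (by omega) hndR hR0 hRev rfl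
    refine ⟨L ++ m :: R', (hperm.cons m).append_left _,
      fun h => hne ((List.cons_inj_right m).1 (List.append_cancel_left h)), ?_⟩
    rw [stackSort_append_cons hL fun x hx => (hR x (hperm.subset hx)).le,
      stackSort_append_cons hL fun x hx => (hR x hx).le, hs]

/-- there are no uniquely sorted permutations of even (positive) length. -/
theorem stmt1 (n : ℕ) (hn : 0 < n) (hev : Even n) :
    ¬ ∃ π : List ℕ, InSn n π ∧ fertility n π = 1 := by
  rintro ⟨π, -, hfert⟩
  obtain ⟨σ, hσ⟩ := Set.ncard_eq_one.1 hfert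
  obtain ⟨hσn, hσπ⟩ : InSn n σ ∧ stackSort σ = π := (Set.ext_iff.1 hσ σ).2 rfl
  have hlen : σ.length = n := by simpa using hσn.length_eq
  obtain ⟨σ', hperm, hne, hs⟩ := exists_perm_ne_stackSort_eq
    (hσn.nodup_iff.2 List.nodup_range') (List.ne_nil_of_length_pos (hlen ▸ hn)) (hlen ▸ hev)
  have hσ' : σ' ∈ {σ | InSn n σ ∧ stackSort σ = π} := ⟨hperm.trans hσn, hs.trans hσπ⟩
  rw [hσ] at hσ'
  exact hne hσ'
end

section
/- For every n ≥ 1, every sorted permutation in S_n has at most ⌊(n−1)/2⌋ descents, and there exists a sorted permutation in S_n with exactly ⌊(n−1)/2⌋ descents. Hence the maximum number of descents of a sorted permutation of length n is ⌊(n−1)/2⌋. -/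
open scoped BigOperators

/-! Since `s(L m R) = s(L) s(R) m` with `m` the largest letter, every descent of `s(w)` lies
inside `s(L)`, inside `s(R)`, or at the junction of the two (only when both are nonempty),
so induction along the recursion gives `2 des(s(w)) ≤ |w| - 1`. The bound is attained: if
`σ ∈ S_n` with `s(σ) = π`, then shifting every letter of `σ` up by one and appending `n+2, 1`
gives `σ' ∈ S_{n+2}` with `s(σ') = (π + 1) 1 (n+2)`, which has one descent more. -/

theorem stackSortFuel_nil (fuel : ℕ) : stackSortFuel fuel [] = [] := by
  cases fuel <;> rfl

theorem exists_eq_append_cons_max (w : List ℕ) (hw : w ≠ []) :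
    ∃ L m R, w = L ++ m :: R ∧ (∀ x ∈ L, x < m) ∧ ∀ x ∈ R, x ≤ m := by
  induction w with
  | nil => exact absurd rfl hw
  | cons a t ih =>
    rcases eq_or_ne t [] with rfl | ht
    · exact ⟨[], a, [], rfl, by simp, by simp⟩
    obtain ⟨L, m, R, rfl, hL, hR⟩ := ih ht
    by_cases ham : a < m
    · refine ⟨a :: L, m, R, rfl, ?_, hR⟩
      simpa [ham] using hL
    · have hma := not_lt.1 ham
      refine ⟨[], a, L ++ m :: R, rfl, by simp, ?_⟩
      simp only [List.mem_append, List.mem_cons]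
      rintro x (hx | rfl | hx)
      exacts [((hL x hx).trans_le hma).le, hma, (hR x hx).trans hma]

theorem maxSplit_induction {P : List ℕ → Prop} (nil : P [])
    (split : ∀ L m R, (∀ x ∈ L, x < m) → (∀ x ∈ R, x ≤ m) → P L → P R → P (L ++ m :: R))
    (w : List ℕ) : P w := by
  induction hw : w.length using Nat.strong_induction_on generalizing w with
  | _ k ih =>
    rcases eq_or_ne w [] with rfl | hne
    · exact nil
    obtain ⟨L, m, R, rfl, hL, hR⟩ := exists_eq_append_cons_max w hne
    simp only [List.length_append, List.length_cons] at hw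
    exact split L m R hL hR (ih _ (by omega) L rfl) (ih _ (by omega) R rfl)

theorem foldr_max_append_cons {L R : List ℕ} {m : ℕ} (hL : ∀ x ∈ L, x < m)
    (hR : ∀ x ∈ R, x ≤ m) : (L ++ m :: R).foldr max 0 = m := by
  refine le_antisymm (List.max_le_of_forall_le _ _ ?_) (List.le_max_of_le (by simp) le_rfl)
  simp only [List.mem_append, List.mem_cons]
  rintro x (hx | rfl | hx)
  exacts [(hL x hx).le, le_rfl, hR x hx]

theorem stackSortFuel_append_cons {L R : List ℕ} {m : ℕ} (hL : ∀ x ∈ L, x < m)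
    (hR : ∀ x ∈ R, x ≤ m) (fuel : ℕ) :
    stackSortFuel (fuel + 1) (L ++ m :: R) =
      stackSortFuel fuel L ++ stackSortFuel fuel R ++ [m] := by
  have hne : ∀ x ∈ L, (x != m) = true := fun x hx => bne_iff_ne.2 (hL x hx).ne
  simp [stackSortFuel, foldr_max_append_cons hL hR, List.takeWhile_append_of_pos hne,
    List.dropWhile_append_of_pos hne]

theorem stackSortFuel_eq_stackSort {w : List ℕ} {fuel : ℕ} (h : w.length ≤ fuel) :
    stackSortFuel fuel w = stackSort w := by
  induction w using maxSplit_induction generalizing fuel with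
  | nil => rw [stackSortFuel_nil, stackSort_nil]
  | split L m R hL hR ihL ihR =>
    simp only [List.length_append, List.length_cons] at h
    obtain ⟨fuel, rfl⟩ : ∃ f, fuel = f + 1 := ⟨fuel - 1, by omega⟩
    rw [stackSort, List.length_append, List.length_cons, ← add_assoc,
      stackSortFuel_append_cons hL hR, stackSortFuel_append_cons hL hR,
      ihL (by omega), ihR (by omega), ihL (by omega), ihR (by omega)]

theorem stackSort_singleton (a : ℕ) : stackSort [a] = [a] := by
  simpa [stackSort_nil] using
    stackSort_append_cons (L := []) (R := []) (m := a) (by simp) (by simp)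

theorem stackSort_perm (w : List ℕ) : (stackSort w).Perm w := by
  induction w using maxSplit_induction with
  | nil => rfl
  | split L m R hL hR ihL ihR =>
    rw [stackSort_append_cons hL hR]
    exact ((List.perm_append_singleton _ _).trans ((ihL.append ihR).cons m)).trans
      List.perm_middle.symm

theorem stackSort_map {f : ℕ → ℕ} (hf : StrictMono f) (w : List ℕ) :
    stackSort (w.map f) = (stackSort w).map f := by
  induction w using maxSplit_induction with
  | nil => rfl
  | split L m R hL hR ihL ihR =>
    have hL' : ∀ y ∈ L.map f, y < f m := by
      simpa using fun x hx => hf (hL x hx)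
    have hR' : ∀ y ∈ R.map f, y ≤ f m := by
      simpa using fun x hx => hf.monotone (hR x hx)
    rw [List.map_append, List.map_cons, stackSort_append_cons hL' hR',
      stackSort_append_cons hL hR, ihL, ihR]
    simp

def descentCount : List ℕ → ℕ
  | a :: b :: t => (if b < a then 1 else 0) + descentCount (b :: t)
  | _ => 0

@[simp] theorem descentCount_nil : descentCount [] = 0 := rfl

@[simp] theorem descentCount_singleton (a : ℕ) : descentCount [a] = 0 := rfl

theorem descentCount_cons_cons (a b : ℕ) (t : List ℕ) :
    descentCount (a :: b :: t) = (if b < a then 1 else 0) + descentCount (b :: t) := rfl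

theorem descentCount_append_cons (u : List ℕ) (b : ℕ) (v : List ℕ) :
    descentCount (u ++ b :: v) = descentCount (u ++ [b]) + descentCount (b :: v) := by
  induction u with
  | nil => simp
  | cons a u ih =>
    cases u with
    | nil => simp [descentCount_cons_cons]
    | cons a' u => simp only [List.cons_append, descentCount_cons_cons] at ih ⊢; omega

theorem descentCount_append_pair (u : List ℕ) (a b : ℕ) :
    descentCount (u ++ [a, b]) = descentCount (u ++ [a]) + if b < a then 1 else 0 := by
  rw [descentCount_append_cons, descentCount_cons_cons, descentCount_singleton, add_zero]

theorem descentCount_concat_le (u : List ℕ) (b : ℕ) :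
    descentCount (u ++ [b]) ≤ descentCount u + 1 := by
  induction u with
  | nil => simp
  | cons a u ih =>
    cases u with
    | nil => simp only [List.cons_append, List.nil_append, descentCount_cons_cons]; split <;> simp
    | cons a' u => simp only [List.cons_append, descentCount_cons_cons] at ih ⊢; omega

theorem descentCount_append_le (u v : List ℕ) :
    descentCount (u ++ v) ≤ descentCount u + descentCount v + 1 := by
  cases v with
  | nil => simp
  | cons b v =>
    rw [descentCount_append_cons]
    have := descentCount_concat_le u b
    omega

theorem descentCount_concat_of_le {u : List ℕ} {b : ℕ} (h : ∀ x ∈ u, x ≤ b) :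
    descentCount (u ++ [b]) = descentCount u := by
  induction u with
  | nil => rfl
  | cons a u ih =>
    cases u with
    | nil => simp [descentCount_cons_cons, h a (by simp)]
    | cons a' u =>
      simp only [List.cons_append, descentCount_cons_cons] at ih ⊢
      rw [ih fun x hx => h x (List.mem_cons_of_mem a hx)]

theorem descentCount_map {f : ℕ → ℕ} (hf : StrictMono f) (w : List ℕ) :
    descentCount (w.map f) = descentCount w := by
  induction w with
  | nil => rfl
  | cons a t ih =>
    cases t with
    | nil => rfl
    | cons b t =>
      simp only [List.map_cons, descentCount_cons_cons] at ih ⊢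
      simp only [ih, hf.lt_iff_lt]

theorem card_descents_eq_sum (π : List ℕ) :
    (descents π).card =
      ∑ k ∈ Finset.range (π.length - 1), if entry π (k + 2) < entry π (k + 1) then 1 else 0 := by
  rw [descents, Finset.card_filter, ← Finset.Ico_add_one_right_eq_Icc,
    Finset.sum_Ico_eq_sum_range, Nat.add_sub_cancel]
  simp only [add_comm 1, add_assoc]

theorem card_descents (π : List ℕ) : (descents π).card = descentCount π := by
  rw [card_descents_eq_sum]
  induction π with
  | nil => rfl
  | cons a t ih =>
    cases t with
    | nil => rfl
    | cons b t =>
      rw [descentCount_cons_cons, ← ih]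
      simp only [List.length_cons, Nat.add_sub_cancel, Finset.sum_range_succ']
      rw [add_comm]
      rfl

theorem descentCount_stackSort_le (w : List ℕ) :
    descentCount (stackSort w) ≤ (w.length - 1) / 2 := by
  induction w using maxSplit_induction with
  | nil => simp [stackSort_nil]
  | split L m R hL hR ihL ihR =>
    have hle : ∀ x ∈ stackSort L ++ stackSort R, x ≤ m := by
      simp only [List.mem_append, (stackSort_perm _).mem_iff]
      rintro x (hx | hx)
      exacts [(hL x hx).le, hR x hx]
    rw [stackSort_append_cons hL hR, descentCount_concat_of_le hle, List.length_append,
      List.length_cons]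
    rcases eq_or_ne L [] with rfl | hL
    · simp only [stackSort_nil, List.nil_append, List.length_nil]
      omega
    rcases eq_or_ne R [] with rfl | hR
    · simp only [stackSort_nil, List.append_nil, List.length_nil]
      omega
    have hLpos := List.length_pos_iff.2 hL
    have hRpos := List.length_pos_iff.2 hR
    have := descentCount_append_le (stackSort L) (stackSort R)
    omega

theorem inSn_map_add_append {n : ℕ} {σ : List ℕ} (hσ : InSn n σ) :
    InSn (n + 2) (σ.map (1 + ·) ++ [n + 2, 1]) := by
  have hshift : (σ.map (1 + ·)).Perm (List.range' 2 n) := by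
    have := hσ.map (1 + ·)
    rwa [List.map_add_range'] at this
  calc List.Perm (σ.map (1 + ·) ++ [n + 2, 1]) (1 :: (σ.map (1 + ·) ++ [n + 2])) := by
        rw [show σ.map (1 + ·) ++ [n + 2, 1] = σ.map (1 + ·) ++ [n + 2] ++ [1] by simp]
        exact List.perm_append_singleton _ _
    List.Perm _ (1 :: (List.range' 2 n ++ [n + 2])) := (hshift.append_right _).cons 1
    _ = List.range' 1 (n + 2) := by rw [List.range'_succ, List.range'_1_concat, add_comm 2]

theorem stackSort_map_add_append {n : ℕ} {σ : List ℕ} (hσ : InSn n σ) :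
    stackSort (σ.map (1 + ·) ++ [n + 2, 1]) = (stackSort σ).map (1 + ·) ++ [1, n + 2] := by
  have hlt : ∀ x ∈ σ.map (1 + ·), x < n + 2 := by
    simp only [List.mem_map, forall_exists_index, and_imp, forall_apply_eq_imp_iff₂]
    intro x hx
    have := List.mem_range'_1.1 (hσ.mem_iff.1 hx)
    omega
  rw [stackSort_append_cons hlt (by simp), stackSort_map add_right_strictMono,
    stackSort_singleton]
  simp

theorem exists_inSn_descentCount_stackSort (n : ℕ) :
    ∃ σ, InSn n σ ∧ descentCount (stackSort σ) = (n - 1) / 2 := by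
  induction n using Nat.twoStepInduction with
  | zero => exact ⟨[], List.Perm.refl _, rfl⟩
  | one => exact ⟨[1], List.Perm.refl _, rfl⟩
  | more n ih _ =>
    obtain ⟨σ, hσ, hdes⟩ := ih
    refine ⟨σ.map (1 + ·) ++ [n + 2, 1], inSn_map_add_append hσ, ?_⟩
    rw [stackSort_map_add_append hσ]
    rcases Nat.eq_zero_or_pos n with rfl | hn
    · rw [List.perm_nil.1 hσ]
      rfl
    have hS : (stackSort σ).Perm (List.range' 1 n) := (stackSort_perm σ).trans hσ
    obtain ⟨S, s, hSs⟩ : ∃ S s, stackSort σ = S ++ [s] := by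
      refine (List.eq_nil_or_concat' (stackSort σ)).resolve_left fun h => ?_
      have := hS.length_eq
      simp only [h, List.length_nil, List.length_range'] at this
      omega
    have hs : 1 ≤ s := (List.mem_range'_1.1 (hS.mem_iff.1 (by simp [hSs]))).1
    calc descentCount ((stackSort σ).map (1 + ·) ++ [1, n + 2])
        = descentCount (S.map (1 + ·) ++ [1 + s, 1]) := by
          rw [descentCount_append_pair, hSs]
          simp
      _ = descentCount (stackSort σ) + 1 := by
          rw [descentCount_append_pair, if_pos (by omega), ← List.map_singleton,
            ← List.map_append, ← hSs, descentCount_map add_right_strictMono]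
      _ = (n + 2 - 1) / 2 := by omega

theorem fertility_pos_iff {n : ℕ} {π : List ℕ} :
    0 < fertility n π ↔ ∃ σ, InSn n σ ∧ stackSort σ = π := by
  have hfin : {σ : List ℕ | InSn n σ ∧ stackSort σ = π}.Finite :=
    (List.finite_toSet (List.range' 1 n).permutations).subset
      fun σ hσ => List.mem_permutations.2 hσ.1
  exact Set.ncard_pos hfin

theorem stmt2_general (n : ℕ) :
    (∀ π : List ℕ, InSn n π → 0 < fertility n π → (descents π).card ≤ (n - 1) / 2) ∧
    (∃ π : List ℕ, InSn n π ∧ 0 < fertility n π ∧ (descents π).card = (n - 1) / 2) := by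
  constructor
  · intro π _ hfert
    obtain ⟨σ, hσ, rfl⟩ := fertility_pos_iff.1 hfert
    simpa [card_descents, hσ.length_eq] using descentCount_stackSort_le σ
  · obtain ⟨σ, hσ, hdes⟩ := exists_inSn_descentCount_stackSort n
    exact ⟨stackSort σ, (stackSort_perm σ).trans hσ, fertility_pos_iff.2 ⟨σ, hσ, rfl⟩,
      (card_descents _).trans hdes⟩

/-- the maximum number of descents of a sorted permutation of length `n`
is `⌊(n−1)/2⌋`. -/
theorem stmt2 (n : ℕ) (hn : 1 ≤ n) :
    (∀ π : List ℕ, InSn n π → 0 < fertility n π → (descents π).card ≤ (n - 1) / 2) ∧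
    (∃ π : List ℕ, InSn n π ∧ 0 < fertility n π ∧ (descents π).card = (n - 1) / 2) :=
  stmt2_general n
end

section
/- Let H be a valid hook configuration of a permutation π ∈ S_n, and consider the coloring of the plot of π induced by H. If i_1 < ⋯ < i_r are indices such that the points (i_1, π_{i_1}), …, (i_r, π_{i_r}) are all colored (i.e., none is a northeast endpoint of a hook) and all receive the same color, then π_{i_1} < ⋯ < π_{i_r}. -/
open scoped BigOperators

theorem List.Nodup.entry_inj {π : List ℕ} (hπ : π.Nodup) {a b : ℕ}
    (ha : 1 ≤ a) (ha' : a ≤ π.length) (hb : 1 ≤ b) (hb' : b ≤ π.length)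
    (hab : entry π a = entry π b) : a = b := by
  simp only [entry, List.getD_eq_getElem _ _ (show a - 1 < π.length by omega),
    List.getD_eq_getElem _ _ (show b - 1 < π.length by omega)] at hab
  have := (hπ.getElem_inj_iff).mp hab
  omega

theorem exists_last_ge_of_lt {α : Type*} [LinearOrder α] (f : ℕ → α) {m m' : ℕ}
    (hmm' : m < m') (hf : f m' < f m) :
    ∃ d, m ≤ d ∧ d < m' ∧ f m ≤ f d ∧ ∀ i, d < i → i ≤ m' → f i < f m := by
  induction m', hmm' using Nat.le_induction with
  | base =>
    exact ⟨m, le_rfl, m.lt_succ_self, le_rfl, fun i hi hi' => by rwa [show i = m + 1 by omega]⟩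
  | succ k hmk ih =>
    by_cases hk : f m ≤ f k
    · exact ⟨k, by omega, k.lt_succ_self, hk, fun i hi hi' => by rwa [show i = k + 1 by omega]⟩
    · obtain ⟨d, hmd, hdk, hd, hafter⟩ := ih (not_le.mp hk)
      refine ⟨d, hmd, hdk.trans k.lt_succ_self, hd, fun i hi hi' => ?_⟩
      rcases Nat.le_succ_iff.mp hi' with hik | rfl
      · exact hafter i hi hik
      · exact hf

theorem mem_descents {π : List ℕ} {d : ℕ} (hd : 1 ≤ d) (hd' : d < π.length)
    (hdesc : entry π (d + 1) < entry π d) : d ∈ descents π := by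
  simp only [descents, Finset.mem_filter, Finset.mem_Icc]
  exact ⟨⟨hd, by omega⟩, hdesc⟩

namespace IsVHC

variable {π : List ℕ} {H : List (ℕ × ℕ)}

theorem exists_hook_of_mem_descents (hH : IsVHC π H) {d : ℕ} (hd : d ∈ descents π) :
    ∃ h ∈ H, h.1 = d := by
  have : d ∈ H.map Prod.fst := by
    rw [hH.1]
    exact (Finset.mem_sort _).mpr hd
  simpa using this

/-- Otherwise the vertical part of `h'` would meet the horizontal part of `h`. -/
theorem entry_snd_lt_of_fst_mem_Ioo (hH : IsVHC π H) {h h' : ℕ × ℕ} (hh : h ∈ H)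
    (hh' : h' ∈ H) (hlt : h.1 < h'.1) (hlt' : h'.1 < h.2) : entry π h'.2 < entry π h.2 := by
  by_contra! hle
  have hbelow : entry π h'.1 ≤ entry π h.2 := not_lt.mp (hH.2.2.1 h hh h'.1 hlt.le hlt'.le)
  have hmeet : (hookPoints π h ∩ hookPoints π h').Nonempty :=
    ⟨(h'.1, entry π h.2), Or.inr ⟨hlt.le, hlt'.le, rfl⟩, Or.inl ⟨rfl, hbelow, hle⟩⟩
  have hne : h ≠ h' := fun heq => hlt.ne (congrArg Prod.fst heq)
  have hh'hook := (hH.2.1 h' hh').2.1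
  rcases hH.2.2.2 h hh h' hh' hne hmeet with heq | heq <;> omega

end IsVHC

/-- If `π_{m'} < π_m`, let `d` be the descent where the plot last drops below `π_m` before
`m'`. The hook starting at `d` passes above `m'`, so `m'` is not sky colored; and it starts
strictly under any hook passing above `m`, so it ends lower than that hook. -/
theorem entry_lt_of_sameColor {n : ℕ} {π : List ℕ} {H : List (ℕ × ℕ)} (hπ : InSn n π)
    (hH : IsVHC π H) {m m' : ℕ} (hm : ColoredPoint π H m) (hm' : ColoredPoint π H m')
    (hmm' : m < m') (hs : SameColor π H m m') : entry π m < entry π m' := by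
  obtain ⟨hm1, hmlen, -⟩ := hm
  obtain ⟨-, hm'len, -⟩ := hm'
  have hnodup : π.Nodup := hπ.nodup_iff.mpr (List.nodup_range' ..)
  have hne : entry π m' ≠ entry π m := fun heq =>
    hmm'.ne' (hnodup.entry_inj (by omega) hm'len hm1 hmlen heq)
  by_contra! hge
  obtain ⟨d, hmd, hdm', hd, hafter⟩ :=
    exists_last_ge_of_lt (entry π) hmm' (lt_of_le_of_ne hge hne)
  obtain ⟨h', hh', rfl⟩ := hH.exists_hook_of_mem_descents
    (mem_descents (by omega) (by omega) ((hafter _ d.lt_succ_self hdm').trans_le hd))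
  obtain ⟨-, hh'lt, -, hh'entry⟩ := hH.2.1 h' hh'
  have hm'h' : m' < h'.2 := by
    by_contra! hle
    exact (hafter h'.2 hh'lt hle).not_ge (hd.trans hh'entry.le)
  have hcand : CandidateHook π H m' h' :=
    ⟨hh', hdm'.le, hm'h', hge.trans_lt (hd.trans_lt hh'entry), hdm'.ne⟩
  rcases hs with ⟨-, hsky'⟩ |
    ⟨h, ⟨⟨hh, hhm, -, -, hhm_ne⟩, -⟩, ⟨⟨-, -, hm'h, -, -⟩, hlowest'⟩⟩
  · exact hsky' h' hcand
  · exact (hH.entry_snd_lt_of_fst_mem_Ioo hh hh' (by omega) (by omega)).not_ge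
      (hlowest' h' hcand)

/-- if points in positions `i_1 < ⋯ < i_r` are all colored and receive the same
color in the coloring induced by a valid hook configuration, then their values increase. -/
theorem stmt5 (n : ℕ) (π : List ℕ) (H : List (ℕ × ℕ))
    (hπ : InSn n π) (hH : IsVHC π H)
    (r : ℕ) (idx : Fin r → ℕ) (hmono : StrictMono idx)
    (hcol : ∀ t, ColoredPoint π H (idx t))
    (hsame : ∀ t t', SameColor π H (idx t) (idx t')) :
    StrictMono (fun t => entry π (idx t)) :=
  fun t t' htt' =>
    entry_lt_of_sameColor hπ hH (hcol t) (hcol t') (hmono htt') (hsame t t')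
end

section
/- For every k ≥ 0 and every ℓ ∈ {1,…,2k+1}, |M̃_ℓ^c(2k+2)| = |M̃_{2k+2−ℓ}^c(2k+2)|, where M̃_ℓ^c(2k+2) denotes the set of pairs (ρ, α) ∈ M̃^c(2k+2) such that {ℓ, 2k+2} is a block of ρ. -/
open scoped BigOperators

/-!
The map `i ↦ n - i` on `{1, …, n - 1}`, fixing `n`, is a reflection of `{1, …, n}` in its cyclic
order (read `n` as `0`), so it sends crossing blocks to crossing blocks. Relabelling the blocks and
the orientation along it is therefore an involution of `M̃^c(n)`; it keeps the block containing `n`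
the unique source, and it exchanges the pairs with block `{ℓ, n}` and those with block `{n - ℓ, n}`.
-/

open Function Finset

theorem Function.Involutive.finset_image {α : Type*} [DecidableEq α] {f : α → α}
    (hf : Involutive f) : Involutive (Finset.image f) := fun s => by
  rw [image_image, hf.comp_self, image_id]

theorem Function.Involutive.mem_finset_image {α : Type*} [DecidableEq α] {f : α → α}
    (hf : Involutive f) {s : Finset α} {a : α} : a ∈ s.image f ↔ f a ∈ s := by
  rw [← hf.injective.mem_finset_image, hf.finset_image]

def relabelPair (f : ℕ → ℕ) (p : Finset (Finset ℕ) × (Finset ℕ → Finset ℕ → Prop)) :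
    Finset (Finset ℕ) × (Finset ℕ → Finset ℕ → Prop) :=
  (p.1.image (image f), fun B B' => p.2 (B.image f) (B'.image f))

theorem relabelPair_involutive {f : ℕ → ℕ} (hf : Involutive f) : Involutive (relabelPair f) := by
  rintro ⟨ρ, d⟩
  simp only [relabelPair, hf.finset_image.finset_image ρ, hf.finset_image _]

structure IsCrossingInvolution (n : ℕ) (f : ℕ → ℕ) : Prop where
  involutive : Involutive f
  map_self : f n = n
  map_mem_Icc : ∀ i ∈ Icc 1 n, f i ∈ Icc 1 n
  crossEdge_image : ∀ B B' : Finset ℕ, B ⊆ Icc 1 n → B' ⊆ Icc 1 n → CrossEdge B B' →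
    CrossEdge (B.image f) (B'.image f)

theorem IsPartitionOf.subset_Icc {n : ℕ} {ρ : Finset (Finset ℕ)} (hρ : IsPartitionOf n ρ)
    {B : Finset ℕ} (hB : B ∈ ρ) : B ⊆ Icc 1 n :=
  hρ.2.2 ▸ le_sup (f := id) hB

namespace IsCrossingInvolution

variable {n : ℕ} {f : ℕ → ℕ}

theorem image_Icc (hf : IsCrossingInvolution n f) : (Icc 1 n).image f = Icc 1 n := by
  ext i
  rw [hf.involutive.mem_finset_image]
  exact ⟨fun hi => hf.involutive i ▸ hf.map_mem_Icc _ hi, hf.map_mem_Icc i⟩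

theorem image_subset_Icc (hf : IsCrossingInvolution n f) {B : Finset ℕ} (hB : B ⊆ Icc 1 n) :
    B.image f ⊆ Icc 1 n :=
  hf.image_Icc ▸ image_subset_image hB

theorem crossEdge_image_iff (hf : IsCrossingInvolution n f) {B B' : Finset ℕ}
    (hB : B ⊆ Icc 1 n) (hB' : B' ⊆ Icc 1 n) :
    CrossEdge (B.image f) (B'.image f) ↔ CrossEdge B B' := by
  refine ⟨fun h => ?_, hf.crossEdge_image B B' hB hB'⟩
  simpa only [hf.involutive.finset_image _] using
    hf.crossEdge_image _ _ (hf.image_subset_Icc hB) (hf.image_subset_Icc hB') h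

theorem isPartitionOf_image (hf : IsCrossingInvolution n f) {ρ : Finset (Finset ℕ)}
    (hρ : IsPartitionOf n ρ) : IsPartitionOf n (ρ.image (image f)) := by
  obtain ⟨hne, hdisj, hsup⟩ := hρ
  refine ⟨?_, ?_, ?_⟩
  · simp only [mem_image, forall_exists_index, and_imp, forall_apply_eq_imp_iff₂]
    exact fun B hB => (hne B hB).image f
  · simp only [mem_image, forall_exists_index, and_imp, forall_apply_eq_imp_iff₂]
    intro B hB B' hB' hne'
    exact (disjoint_image hf.involutive.injective).2
      (hdisj B hB B' hB' fun hBB' => hne' (congrArg _ hBB'))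
  · rw [sup_image, Function.id_comp, ← hf.image_Icc, ← hsup, sup_eq_biUnion, sup_eq_biUnion,
      biUnion_image]
    rfl

def crossingGraphIso (hf : IsCrossingInvolution n f) {ρ : Finset (Finset ℕ)}
    (hρ : IsPartitionOf n ρ) : crossingGraph ρ ≃g crossingGraph (ρ.image (image f)) where
  toEquiv := (hf.involutive.finset_image.toPerm _).subtypeEquiv fun B => by
    simp [hf.involutive.finset_image.mem_finset_image, hf.involutive.finset_image B]
  map_rel_iff' {B B'} := hf.crossEdge_image_iff (hρ.subset_Icc B.2) (hρ.subset_Icc B'.2)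

theorem relabelPair_mem_ptildeC (hf : IsCrossingInvolution n f) {p}
    (hp : p ∈ PtildeC n) : relabelPair f p ∈ PtildeC n := by
  obtain ⟨ρ, d⟩ := p
  obtain ⟨hρ, hconn, hsupp, htotal, hasymm, hacyc, hsource⟩ : IsOrientedPartitionPair n ρ d := hp
  show IsOrientedPartitionPair n (ρ.image (image f)) fun B B' => d (B.image f) (B'.image f)
  have hF := hf.involutive.finset_image
  have hmem : ∀ B, B ∈ ρ.image (image f) ↔ B.image f ∈ ρ := fun B => hF.mem_finset_image
  refine ⟨hf.isPartitionOf_image hρ, (hf.crossingGraphIso hρ).connected_iff.1 hconn, ?_, ?_,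
    fun B B' => hasymm _ _, fun B hB => hacyc _ (hB.lift (image f) fun _ _ h => h), ?_⟩
  · intro B B' hBB'
    obtain ⟨hB, hB', hcross⟩ := hsupp _ _ hBB'
    refine ⟨(hmem B).2 hB, (hmem B').2 hB', ?_⟩
    simpa only [hF _] using
      (hf.crossEdge_image_iff (hρ.subset_Icc hB) (hρ.subset_Icc hB')).2 hcross
  · intro B hB B' hB' hcross
    rw [hmem] at hB hB'
    refine htotal _ hB _ hB' ((hf.crossEdge_image_iff (hρ.subset_Icc hB) (hρ.subset_Icc hB')).1 ?_)
    simpa only [hF _] using hcross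
  · intro B hB
    rw [hmem] at hB
    rw [hF.surjective.forall]
    simp only [hF _]
    rw [hsource _ hB, hf.involutive.mem_finset_image, hf.map_self]

theorem relabelPair_mem_mtildeC (hf : IsCrossingInvolution n f) {p}
    (hp : p ∈ MtildeC n) : relabelPair f p ∈ MtildeC n := by
  refine ⟨hf.relabelPair_mem_ptildeC hp.1, ?_⟩
  simp only [relabelPair, forall_mem_image]
  intro B hB
  rw [card_image_of_injective _ hf.involutive.injective]
  exact hp.2 B hB

theorem relabelPair_mem_mtildeC_iff (hf : IsCrossingInvolution n f) {p} :
    relabelPair f p ∈ MtildeC n ↔ p ∈ MtildeC n :=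
  ⟨fun hp => relabelPair_involutive hf.involutive p ▸ hf.relabelPair_mem_mtildeC hp,
    hf.relabelPair_mem_mtildeC⟩

theorem ncard_mtildeC_image_mem_eq (hf : IsCrossingInvolution n f) (B : Finset ℕ) :
    {p | p ∈ MtildeC n ∧ B.image f ∈ p.1}.ncard = {p | p ∈ MtildeC n ∧ B ∈ p.1}.ncard := by
  have hR := relabelPair_involutive hf.involutive
  have hpre : {p | p ∈ MtildeC n ∧ B.image f ∈ p.1} =
      relabelPair f ⁻¹' {p | p ∈ MtildeC n ∧ B ∈ p.1} := by
    ext p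
    exact and_congr hf.relabelPair_mem_mtildeC_iff.symm
      hf.involutive.finset_image.mem_finset_image.symm
  rw [hpre, Set.ncard_preimage_of_injective_subset_range hR.injective
    (hR.surjective.range_eq ▸ Set.subset_univ _)]

end IsCrossingInvolution

def mirrorBelow (n i : ℕ) : ℕ := if 0 < i ∧ i < n then n - i else i

theorem crosses_image_mirrorBelow {n : ℕ} {B B' : Finset ℕ} (hB : B ⊆ Icc 1 n)
    (hB' : B' ⊆ Icc 1 n) (h : Crosses B B') :
    Crosses (B.image (mirrorBelow n)) (B'.image (mirrorBelow n)) ∨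
      Crosses (B'.image (mirrorBelow n)) (B.image (mirrorBelow n)) := by
  obtain ⟨i, hi, k, hk, j, hj, l, hl, hij, hjk, hkl⟩ := h
  have := mem_Icc.1 (hB hi); have := mem_Icc.1 (hB hk)
  have := mem_Icc.1 (hB' hj); have := mem_Icc.1 (hB' hl)
  -- reversing `{1, …, n - 1}` turns `i < j < k < l` into `k' < j' < i' < l' = n` if `l = n`,
  -- and into `l' < k' < j' < i'` otherwise
  by_cases hln : l = n
  · exact .inl ⟨_, mem_image_of_mem _ hk, _, mem_image_of_mem _ hi, _, mem_image_of_mem _ hj, _,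
      mem_image_of_mem _ hl, by unfold mirrorBelow; split_ifs <;> omega⟩
  · exact .inr ⟨_, mem_image_of_mem _ hl, _, mem_image_of_mem _ hj, _, mem_image_of_mem _ hk, _,
      mem_image_of_mem _ hi, by unfold mirrorBelow; split_ifs <;> omega⟩

theorem mirrorBelow_involutive (n : ℕ) : Involutive (mirrorBelow n) := fun i => by
  unfold mirrorBelow; split_ifs <;> omega

theorem isCrossingInvolution_mirrorBelow (n : ℕ) : IsCrossingInvolution n (mirrorBelow n) where
  involutive := mirrorBelow_involutive n
  map_self := by simp [mirrorBelow]
  map_mem_Icc i hi := by rw [mem_Icc] at hi ⊢; unfold mirrorBelow; split_ifs <;> omega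
  crossEdge_image B B' hB hB' h := by
    refine ⟨fun heq => h.1 ((mirrorBelow_involutive n).finset_image.injective heq), ?_⟩
    rcases h.2 with hc | hc
    · exact crosses_image_mirrorBelow hB hB' hc
    · exact (crosses_image_mirrorBelow hB' hB hc).symm

theorem image_pair_mirrorBelow {n l : ℕ} (hl : 0 < l) (hln : l < n) :
    ({l, n} : Finset ℕ).image (mirrorBelow n) = {n - l, n} := by
  simp [mirrorBelow, hl, hln]

/-- `|M̃_ℓ^c(2k+2)| = |M̃_{2k+2−ℓ}^c(2k+2)|`. -/
theorem stmt12 (k l : ℕ) (h1 : 1 ≤ l) (h2 : l ≤ 2 * k + 1) :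
    {p | p ∈ MtildeC (2 * k + 2) ∧ ({l, 2 * k + 2} : Finset ℕ) ∈ p.1}.ncard =
    {p | p ∈ MtildeC (2 * k + 2) ∧
      ({2 * k + 2 - l, 2 * k + 2} : Finset ℕ) ∈ p.1}.ncard := by
  rw [← image_pair_mirrorBelow h1 (by omega),
    (isCrossingInvolution_mirrorBelow _).ncard_mtildeC_image_mem_eq]
end

section
/- A decreasing binary plane tree T is lonely (i.e., T is the unique decreasing binary plane tree whose postorder reading equals P(T)) if and only if T is full and canonical. -/
open scoped BigOperators

/-!
A full canonical tree is recovered from its postorder reading. The key invariant: if the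
postorder reading of a decreasing tree ends with a nonempty prefix of the postorder reading of
a full canonical tree `R`, then every earlier letter is at most the first letter of `R`. At a
node `node l x r` of a full canonical tree the last letter of `P(l)` is its root, which exceeds
the first letter of `P(r)`, so any decreasing tree with reading `P(l) P(r) x` must split it
exactly between `P(l)` and `P(r)`.

Conversely, a defect can be repaired without changing the postorder reading: a vertex with a
single child may move that child to the other side, and at a vertex whose left child is smaller
than its leftmost cousin `e`, the vertex `e` (a leaf of the full right subtree) can be cut off
and reattached as the right child of the left child.
-/

namespace BTree

theorem postorder_eq_nil {T : BTree} : postorder T = [] ↔ T = leaf := by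
  cases T <;> simp [postorder]

theorem postorder_perm_inorder (T : BTree) : (postorder T).Perm (inorder T) := by
  induction T with
  | leaf => rfl
  | node l x r ihl ihr =>
    simpa [postorder, inorder] using
      ihl.append ((ihr.append_right [x]).trans List.perm_append_comm)

theorem mem_postorder {T : BTree} {y : ℕ} : y ∈ postorder T ↔ y ∈ inorder T :=
  (postorder_perm_inorder T).mem_iff

theorem isDecreasing_node_iff {l r : BTree} {x : ℕ} :
    IsDecreasing (node l x r) ↔ (∀ y ∈ postorder l, y < x) ∧ (∀ y ∈ postorder r, y < x) ∧
      IsDecreasing l ∧ IsDecreasing r := by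
  simp only [IsDecreasing, mem_postorder]

theorem IsDBPT.of_postorder_eq {T T' : BTree} (hT : IsDBPT T) (hT' : IsDecreasing T')
    (h : postorder T' = postorder T) : IsDBPT T' := by
  have hperm : (inorder T').Perm (inorder T) :=
    (postorder_perm_inorder T').symm.trans (h ▸ postorder_perm_inorder T)
  exact ⟨hT', hperm.nodup_iff.2 hT.2.1, fun y hy => hT.2.2 y (hperm.subset hy)⟩

theorem getLast?_postorder {T : BTree} (hT : T ≠ leaf) :
    (postorder T).getLast? = some (rootD T) := by
  cases T with
  | leaf => exact absurd rfl hT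
  | node l x r => simp [postorder, rootD]

theorem le_rootD {T : BTree} (hT : IsDecreasing T) {y : ℕ} (hy : y ∈ inorder T) :
    y ≤ rootD T := by
  cases T with
  | leaf => simp [inorder] at hy
  | node l x r =>
    simp only [inorder, List.mem_append, List.mem_cons] at hy
    rcases hy with hy | rfl | hy
    exacts [(hT.1 y hy).le, le_rfl, (hT.2.1 y hy).le]

theorem lt_of_postorder_eq_append_singleton {A : BTree} (hA : IsDecreasing A) {p : List ℕ}
    {x : ℕ} (h : postorder A = p ++ [x]) : ∀ m ∈ p, m < x := by
  cases A with
  | leaf => simp [postorder] at h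
  | node l z r =>
    obtain ⟨rfl, hzx⟩ := List.append_inj' h rfl
    obtain rfl : z = x := by simpa using hzx
    intro m hm
    rcases List.mem_append.1 hm with hm | hm
    exacts [(isDecreasing_node_iff.1 hA).1 m hm, (isDecreasing_node_iff.1 hA).2.1 m hm]

def eraseLeftmost : BTree → BTree
  | leaf => leaf
  | node leaf _ r => r
  | node (node a y b) x r => node (eraseLeftmost (node a y b)) x r

theorem postorder_eraseLeftmost {T : BTree} (hf : IsFull T) (hT : T ≠ leaf) :
    postorder T = (inorder T).headD 0 :: postorder (eraseLeftmost T) := by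
  induction T with
  | leaf => exact absurd rfl hT
  | node l x r ihl _ =>
    cases l with
    | leaf =>
      obtain rfl : r = leaf := hf.1.1 rfl
      rfl
    | node a y b =>
      have ih := ihl hf.2.1 (by simp)
      simp only [postorder, eraseLeftmost] at ih ⊢
      rw [ih]
      simp [inorder]

theorem IsFull.headD_postorder {T : BTree} (hf : IsFull T) :
    (postorder T).headD 0 = (inorder T).headD 0 := by
  rcases eq_or_ne T leaf with rfl | hT
  · rfl
  · rw [postorder_eraseLeftmost hf hT, List.headD_cons]

theorem inorder_eraseLeftmost_sublist (T : BTree) :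
    (inorder (eraseLeftmost T)).Sublist (inorder T) := by
  induction T with
  | leaf => exact List.Sublist.refl _
  | node l x r ihl _ =>
    cases l with
    | leaf => simp [inorder, eraseLeftmost]
    | node a y b =>
      simp only [eraseLeftmost, inorder] at ihl ⊢
      exact ihl.append_right _

theorem IsDecreasing.eraseLeftmost {T : BTree} (hT : IsDecreasing T) :
    IsDecreasing (eraseLeftmost T) := by
  induction T with
  | leaf => trivial
  | node l x r ihl _ =>
    cases l with
    | leaf => exact hT.2.2.2
    | node a y b =>
      exact ⟨fun z hz => hT.1 z ((inorder_eraseLeftmost_sublist _).subset hz), hT.2.1,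
        ihl hT.2.2.1, hT.2.2.2⟩

def PrefixBounded (R : BTree) : Prop :=
  ∀ A p t, IsDecreasing A → postorder A = p ++ t → t ≠ [] → t <+: postorder R →
    ∀ m ∈ p, m ≤ (postorder R).headD 0

theorem PrefixBounded.not_mem {R A : BTree} {p t : List ℕ} {b : ℕ} (hR : PrefixBounded R)
    (hb : (postorder R).headD 0 < b) (hA : IsDecreasing A) (h : postorder A = p ++ t)
    (ht : t ≠ []) (htR : t <+: postorder R) : b ∉ p :=
  fun hbp => (hR A p t hA h ht htR b hbp).not_gt hb

theorem PrefixBounded.postorder_eq_of_append_eq {R A₁ A₂ : BTree} {w : List ℕ} {b : ℕ}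
    (hR : PrefixBounded R) (hR₀ : postorder R ≠ []) (hw : w.getLast? = some b)
    (hb : (postorder R).headD 0 < b) (hA₁ : IsDecreasing A₁) (hA₂ : IsDecreasing A₂)
    (h : postorder A₁ ++ postorder A₂ = w ++ postorder R) :
    postorder A₁ = w ∧ postorder A₂ = postorder R := by
  rcases List.append_eq_append_iff.1 h with ⟨as, rfl, h₂⟩ | ⟨bs, h₁, h₂⟩
  · rcases eq_or_ne as [] with rfl | has
    · simpa using h₂
    have hbas : b ∈ as := List.mem_of_getLast? (by simpa [has] using hw)
    exact absurd hbas (hR.not_mem hb hA₂ h₂ hR₀ (List.prefix_refl _))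
  · rcases eq_or_ne bs [] with rfl | hbs
    · simp_all
    exact absurd (List.mem_of_getLast? hw) (hR.not_mem hb hA₁ h₁ hbs ⟨_, h₂.symm⟩)

theorem prefixBounded_of_isFull_of_isCanonical {R : BTree} (hf : IsFull R)
    (hc : IsCanonical R) : PrefixBounded R := by
  induction R with
  | leaf =>
    intro A p t _ _ ht htR
    exact absurd (List.prefix_nil.1 htR) ht
  | node Rl y Rr ihl ihr =>
    intro A p t hA hpA ht htR
    by_cases hRl : Rl = leaf
    · obtain rfl : Rr = leaf := hf.1.1 hRl
      subst hRl
      obtain rfl : t = [y] := by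
        simpa [postorder, List.prefix_cons_iff, ht] using htR
      exact fun m hm => (lt_of_postorder_eq_append_singleton hA hpA m hm).le
    have hRr : Rr ≠ leaf := fun h => hRl (hf.1.2 h)
    have hl := ihl hf.2.1 hc.2.1
    have hr := ihr hf.2.2 hc.2.2
    have hb : (postorder Rr).headD 0 < rootD Rl := by
      rw [hf.2.2.headD_postorder]
      exact (hc.1 hRl).2
    have hlast := getLast?_postorder hRl
    have hhead : (postorder (node Rl y Rr)).headD 0 = (postorder Rl).headD 0 := by
      cases hPl : postorder Rl
      · exact absurd (postorder_eq_nil.1 hPl) hRl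
      · simp [postorder, hPl]
    rw [hhead]
    rcases List.prefix_concat_iff.1 htR with rfl | ⟨s, hs⟩
    · cases A with
      | leaf => simp [postorder] at hpA
      | node Al z Ar =>
        have hpA' : (postorder Al ++ postorder Ar) ++ [z] =
            ((p ++ postorder Rl) ++ postorder Rr) ++ [y] := by
          simpa [postorder] using hpA
        have hsplit := (List.append_inj' hpA' rfl).1
        have hAl := (hr.postorder_eq_of_append_eq (mt postorder_eq_nil.1 hRr)
          (by rw [List.getLast?_append, hlast]; rfl) hb hA.2.2.1 hA.2.2.2 hsplit).1
        exact hl Al p _ hA.2.2.1 hAl (mt postorder_eq_nil.1 hRl) (List.prefix_refl _)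
    rcases List.append_eq_append_iff.1 hs with ⟨as, h₁, -⟩ | ⟨bs, rfl, h₂⟩
    · exact hl A p t hA hpA ht ⟨as, h₁.symm⟩
    rcases eq_or_ne bs [] with rfl | hbs
    · exact hl A p _ hA hpA ht (by simp)
    refine absurd (List.mem_append_right p (List.mem_of_getLast? hlast))
      (hr.not_mem hb hA ?_ hbs ⟨s, h₂.symm⟩)
    rw [hpA, List.append_assoc]

theorem eq_of_isFull_of_isCanonical_of_postorder_eq {T T' : BTree} (hf : IsFull T)
    (hc : IsCanonical T) (hT' : IsDecreasing T') (h : postorder T' = postorder T) : T' = T := by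
  induction T generalizing T' with
  | leaf => exact postorder_eq_nil.1 h
  | node L x R ihL ihR =>
    cases T' with
    | leaf => simp [postorder] at h
    | node L' x' R' =>
      obtain ⟨hsplit, hx⟩ := List.append_inj' h rfl
      obtain rfl : x' = x := by simpa using hx
      by_cases hL : L = leaf
      · obtain rfl : R = leaf := hf.1.1 hL
        subst hL
        simp_all [postorder, postorder_eq_nil]
      have hR : R ≠ leaf := fun h => hL (hf.1.2 h)
      have hb : (postorder R).headD 0 < rootD L := by
        rw [hf.2.2.headD_postorder]
        exact (hc.1 hL).2
      obtain ⟨hpL, hpR⟩ :=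
        (prefixBounded_of_isFull_of_isCanonical hf.2.2 hc.2.2).postorder_eq_of_append_eq
          (mt postorder_eq_nil.1 hR) (getLast?_postorder hL) hb hT'.2.2.1 hT'.2.2.2 hsplit
      rw [ihL hf.2.1 hc.2.1 hT'.2.2.1 hpL, ihR hf.2.2 hc.2.2 hT'.2.2.2 hpR]

theorem exists_postorder_eq_of_lt_headD {L R : BTree} {x : ℕ}
    (hd : IsDecreasing (node L x R)) (hf : IsFull R) (hR : R ≠ leaf)
    (hlt : rootD L < (inorder R).headD 0) :
    ∃ T', IsDecreasing T' ∧ postorder T' = postorder (node L x R) ∧ T' ≠ node L x R := by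
  set e := (inorder R).headD 0
  have hpost : postorder R = e :: postorder (eraseLeftmost R) := postorder_eraseLeftmost hf hR
  have he : e ∈ inorder R := mem_postorder.1 (hpost ▸ List.mem_cons_self)
  refine ⟨node (node L e leaf) x (eraseLeftmost R), ?_, ?_, ?_⟩
  · refine ⟨?_, fun y hy => hd.2.1 y ((inorder_eraseLeftmost_sublist R).subset hy),
      ⟨fun y hy => (le_rootD hd.2.2.1 hy).trans_lt hlt, by simp [inorder], hd.2.2.1, trivial⟩,
      hd.2.2.2.eraseLeftmost⟩
    simp only [inorder, List.mem_append, List.mem_singleton]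
    rintro y (hy | rfl)
    exacts [hd.1 y hy, hd.2.1 _ he]
  · simp [postorder, hpost]
  · intro h
    have := congrArg (fun T => (inorder T).length) (node.inj h).1
    simp [inorder] at this

theorem exists_postorder_eq_of_defect_at_root {L R : BTree} {x : ℕ}
    (hd : IsDecreasing (node L x R)) (hnd : (inorder (node L x R)).Nodup) (hfR : IsFull R)
    (hroot : ¬((L = leaf ↔ R = leaf) ∧ (L ≠ leaf → R ≠ leaf ∧ (inorder R).headD 0 < rootD L))) :
    ∃ T', IsDecreasing T' ∧ postorder T' = postorder (node L x R) ∧ T' ≠ node L x R := by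
  by_cases hL : L = leaf <;> by_cases hR : R = leaf
  · simp [hL, hR] at hroot
  · subst hL
    exact ⟨node R x leaf, ⟨hd.2.1, hd.1, hd.2.2.2, hd.2.2.1⟩, by simp [postorder],
      fun h => hR (node.inj h).1⟩
  · subst hR
    exact ⟨node leaf x L, ⟨hd.2.1, hd.1, hd.2.2.2, hd.2.2.1⟩, by simp [postorder],
      fun h => hL (node.inj h).1.symm⟩
  · have hne : rootD L ≠ (inorder R).headD 0 := by
      refine (List.nodup_append.1 hnd).2.2 _ ?_ _ (List.mem_cons_of_mem _ ?_)
      · cases L <;> simp_all [inorder, rootD]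
      · cases R with
        | leaf => exact absurd rfl hR
        | node a y b => cases h : inorder a <;> simp [inorder, h]
    exact exists_postorder_eq_of_lt_headD hd hfR hR
      (hne.lt_of_le (not_lt.1 fun h => hroot ⟨iff_of_false hL hR, fun _ => ⟨hR, h⟩⟩))

theorem exists_postorder_eq_of_not_isFull_and_isCanonical {T : BTree} (hd : IsDecreasing T)
    (hnd : (inorder T).Nodup) (hT : ¬(IsFull T ∧ IsCanonical T)) :
    ∃ T', IsDecreasing T' ∧ postorder T' = postorder T ∧ T' ≠ T := by
  induction T with
  | leaf => exact absurd ⟨trivial, trivial⟩ hT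
  | node L x R ihL ihR =>
    have hndL : (inorder L).Nodup := (List.nodup_append.1 hnd).1
    have hndR : (inorder R).Nodup := (List.nodup_append.1 hnd).2.1.of_cons
    by_cases hL : IsFull L ∧ IsCanonical L
    swap
    · obtain ⟨L', hdL', hpL', hne⟩ := ihL hd.2.2.1 hndL hL
      refine ⟨node L' x R, ?_, by simp [postorder, hpL'], fun h => hne (node.inj h).1⟩
      have := isDecreasing_node_iff.1 hd
      exact isDecreasing_node_iff.2 ⟨hpL' ▸ this.1, this.2.1, hdL', this.2.2.2⟩
    by_cases hR : IsFull R ∧ IsCanonical R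
    swap
    · obtain ⟨R', hdR', hpR', hne⟩ := ihR hd.2.2.2 hndR hR
      refine ⟨node L x R', ?_, by simp [postorder, hpR'], fun h => hne (node.inj h).2.2⟩
      have := isDecreasing_node_iff.1 hd
      exact isDecreasing_node_iff.2 ⟨this.1, hpR' ▸ this.2.1, this.2.2.1, hdR'⟩
    exact exists_postorder_eq_of_defect_at_root hd hnd hR.1
      fun ⟨hfull, hcan⟩ => hT ⟨⟨hfull, hL.1, hR.1⟩, hcan, hL.2, hR.2⟩

end BTree

/-- a decreasing binary plane tree is lonely iff it is full and canonical. -/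
theorem stmt16 (T : BTree) (hT : BTree.IsDBPT T) :
    BTree.Lonely T ↔ BTree.IsFull T ∧ BTree.IsCanonical T := by
  constructor
  · intro hlonely
    by_contra hdefect
    obtain ⟨T', hdT', hpT', hne⟩ :=
      BTree.exists_postorder_eq_of_not_isFull_and_isCanonical hT.1 hT.2.1 hdefect
    exact hne (hlonely.2 T' (hT.of_postorder_eq hdT' hpT') hpT')
  · rintro ⟨hf, hc⟩
    exact ⟨hT, fun T' hT' hp =>
      BTree.eq_of_isFull_of_isCanonical_of_postorder_eq hf hc hT'.1 hp⟩
end
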